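/- If an economy satisfies gains from trade, then the induced NTU game is balanced: for every balanced collection of coalitions 𝒮 and every u ∈ ∩_{S∈𝒮} V(S), we have u ∈ V(A). -/
import Mathlib


def IsSAlloc {A O : Type} [DecidableEq O] (ω X : A → Finset O) (S : Finset A) : Prop :=
  (∀ i ∈ S, ∀ j ∈ S, i ≠ j → Disjoint (X i) (X j)) ∧ S.biUnion X ⊆ S.biUnion ω

/-- `u ∈ V(S)` for utilities taking values in `ℝ ∪ {−∞}` (`EReal`). -/
def memV {A O : Type} [DecidableEq O] (ω : A → Finset O) (v : A → Finset O → EReal)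
    (S : Finset A) (u : A → ℝ) : Prop :=
  ∃ X : A → Finset O, IsSAlloc ω X S ∧ ∀ i ∈ S, (u i : EReal) ≤ v i (X i)

/-- if an economy satisfies gains from trade, then the induced NTU
game is balanced. -/
theorem gains_from_trade_balanced {A O : Type} [Fintype A] [Fintype O]
    [DecidableEq A] [DecidableEq O]
    (ω : A → Finset O) (v : A → Finset O → EReal)
    (hne : ∀ i, (ω i).Nonempty)
    (hdisj : ∀ i j, i ≠ j → Disjoint (ω i) (ω j))
    (hcover : Finset.univ.biUnion ω = (Finset.univ : Finset O))
    (hgft : ∀ (S S' : Finset A) (X X' : A → Finset O),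
      IsSAlloc ω X S → IsSAlloc ω X' S' →
      ∃ Y : A → Finset O, IsSAlloc ω Y (S ∪ S') ∧ ∀ h ∈ S ∪ S',
        min (if h ∈ S then v h (X h) else v h (X' h))
            (if h ∈ S' then v h (X' h) else v h (X h)) ≤ v h (Y h))
    (𝒮 : Finset (Finset A)) (δ : Finset A → ℝ)
    (hSne : ∀ S ∈ 𝒮, S.Nonempty)
    (hδ : ∀ S ∈ 𝒮, 0 ≤ δ S)
    (hbal : ∀ i : A, ∑ S ∈ 𝒮.filter (fun S => i ∈ S), δ S = 1)
    (u : A → ℝ)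
    (hu : ∀ S ∈ 𝒮, memV ω v S u) :
    memV ω v Finset.univ u := by
  have combine : ∀ S S' : Finset A, memV ω v S u → memV ω v S' u → memV ω v (S ∪ S') u := by
    rintro S S' ⟨X, hX, hXu⟩ ⟨X', hX', hX'u⟩
    obtain ⟨Y, hY, hYv⟩ := hgft S S' X X' hX hX'
    refine ⟨Y, hY, fun h hh => le_trans ?_ (hYv h hh)⟩
    rcases Finset.mem_union.1 hh with h1 | h2
    · simp only [if_pos h1]
      refine le_min (hXu h h1) ?_
      split_ifs with h2
      · exact hX'u h h2
      · exact hXu h h1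
    · simp only [if_pos h2]
      refine le_min ?_ (hX'u h h2)
      split_ifs with h1
      · exact hXu h h1
      · exact hX'u h h2
  have key : ∀ T : Finset (Finset A), (∀ S ∈ T, memV ω v S u) → memV ω v (T.sup id) u := by
    intro T
    induction T using Finset.induction with
    | empty => exact fun _ => ⟨fun _ => ∅, ⟨by simp, by simp⟩, by simp⟩
    | @insert S T hnm ih =>
      intro hT
      rw [Finset.sup_insert, id, Finset.sup_eq_union]
      exact combine _ _ (hT _ (Finset.mem_insert_self _ _))
        (ih fun S hS => hT S (Finset.mem_insert_of_mem hS))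
  have hsup : 𝒮.sup id = Finset.univ := by
    apply Finset.eq_univ_of_forall
    intro i
    have h1 := hbal i
    have hfne : (𝒮.filter (fun S => i ∈ S)).Nonempty := by
      by_contra h
      rw [Finset.not_nonempty_iff_eq_empty] at h
      rw [h] at h1; simp at h1
    obtain ⟨S, hS⟩ := hfne
    rw [Finset.mem_filter] at hS
    exact Finset.mem_sup.2 ⟨S, hS.1, hS.2⟩
  rw [← hsup]
  exact key 𝒮 hu
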